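/- Let X = (ξ₁, ξ₂) be a random vector in ℝ² with density p satisfying ∫∫ p(x₁,x₂)² e^{(x₁²+x₂²)/2} dx₁ dx₂ < ∞. Then χ²(X, Z) ≥ χ²(ξ₁, ζ) + χ²(ξ₂, ζ), where Z is standard normal in ℝ² and ζ ~ N(0,1). -/

import Mathlib

/-!
Let `γ` be the standard Gaussian and `f = p / (φ ⊗ φ)`, `φ = stdNormalPDF`, the density of `X`
with respect to `γ ⊗ γ`, with one-coordinate averages `f₁ x₁ = ∫ f(x₁, ·) dγ` and
`f₂ x₂ = ∫ f(·, x₂) dγ`.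
Averaging over one coordinate is an orthogonal projection in `L²(γ ⊗ γ)`, so
`‖f‖² = ‖f₁‖² + ‖f - f₁‖²`. The average of `f - f₁` over the first coordinate is `f₂ - ∫ f`,
so by Jensen `‖f - f₁‖² ≥ ‖f₂ - ∫ f‖² = ‖f₂‖² - (∫ f)²`. Since `∫ f = 1`, this reads
`χ²(X) ≥ χ²(ξ₁) + χ²(ξ₂)`.
-/

open MeasureTheory

/-- The standard normal density on the real line. -/
noncomputable def stdNormalPDF (x : ℝ) : ℝ :=
  (Real.sqrt (2 * Real.pi))⁻¹ * Real.exp (-x ^ 2 / 2)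

open ProbabilityTheory

namespace MeasureTheory

theorem MemLp.swap {α β ε : Type*} [MeasurableSpace α] [MeasurableSpace β] [TopologicalSpace ε]
    [ContinuousENorm ε] {μ : Measure α} {ν : Measure β} [SFinite μ] [SFinite ν]
    {f : α × β → ε} {p : ENNReal} (hf : MemLp f p (μ.prod ν)) :
    MemLp (fun z : β × α => f z.swap) p (ν.prod μ) :=
  hf.comp_measurePreserving Measure.measurePreserving_swap

section ProbabilityProduct

variable {α β : Type*} [MeasurableSpace α] [MeasurableSpace β]
  {μ : Measure α} {ν : Measure β} [IsProbabilityMeasure μ] [IsProbabilityMeasure ν]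
  {f : α × β → ℝ}

theorem sq_integral_le_integral_sq {g : α → ℝ} (hg : MemLp g 2 μ) :
    (∫ x, g x ∂μ) ^ 2 ≤ ∫ x, g x ^ 2 ∂μ := by
  have h := variance_nonneg g μ
  rw [variance_eq_sub hg] at h
  simpa [sub_nonneg] using h

theorem ae_sq_integral_prod_le (hf : MemLp f 2 (μ.prod ν)) :
    ∀ᵐ x ∂μ, (∫ y, f (x, y) ∂ν) ^ 2 ≤ ∫ y, f (x, y) ^ 2 ∂ν := by
  filter_upwards [hf.1.prodMk_left, hf.integrable_sq.prod_right_ae] with x hxm hxi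
  exact sq_integral_le_integral_sq ((memLp_two_iff_integrable_sq hxm).2 hxi)

theorem MemLp.integral_prod_left (hf : MemLp f 2 (μ.prod ν)) :
    MemLp (fun x => ∫ y, f (x, y) ∂ν) 2 μ := by
  have hm := hf.1.integral_prod_right'
  refine (memLp_two_iff_integrable_sq hm).2 <|
    hf.integrable_sq.integral_prod_left.mono' (hm.pow 2) ?_
  filter_upwards [ae_sq_integral_prod_le hf] with x hx
  rwa [Real.norm_of_nonneg (sq_nonneg _)]

theorem integral_sq_integral_prod_le (hf : MemLp f 2 (μ.prod ν)) :
    ∫ x, (∫ y, f (x, y) ∂ν) ^ 2 ∂μ ≤ ∫ z, f z ^ 2 ∂(μ.prod ν) := by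
  rw [integral_prod _ hf.integrable_sq]
  exact integral_mono_ae hf.integral_prod_left.integrable_sq
    hf.integrable_sq.integral_prod_left (ae_sq_integral_prod_le hf)

theorem MemLp.integral_prod_right (hf : MemLp f 2 (μ.prod ν)) :
    MemLp (fun y => ∫ x, f (x, y) ∂μ) 2 ν :=
  hf.swap.integral_prod_left

theorem integral_sq_integral_prod_symm_le (hf : MemLp f 2 (μ.prod ν)) :
    ∫ y, (∫ x, f (x, y) ∂μ) ^ 2 ∂ν ≤ ∫ z, f z ^ 2 ∂(μ.prod ν) := by
  rw [← integral_prod_swap]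
  exact integral_sq_integral_prod_le hf.swap

theorem integral_sq_eq_integral_sq_integral_prod_add (hf : MemLp f 2 (μ.prod ν)) :
    ∫ z, f z ^ 2 ∂(μ.prod ν) =
      ∫ x, (∫ y, f (x, y) ∂ν) ^ 2 ∂μ + ∫ z, (f z - ∫ y, f (z.1, y) ∂ν) ^ 2 ∂(μ.prod ν) := by
  have hf₁ := hf.integral_prod_left.comp_fst ν
  have hmul : Integrable (fun z => f z * ∫ y, f (z.1, y) ∂ν) (μ.prod ν) := hf.integrable_mul hf₁
  have hcross : ∫ z, f z * ∫ y, f (z.1, y) ∂ν ∂(μ.prod ν) = ∫ x, (∫ y, f (x, y) ∂ν) ^ 2 ∂μ := by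
    rw [integral_prod _ hmul]
    simp only [integral_mul_const, sq]
  have hsq : ∫ z, (∫ y, f (z.1, y) ∂ν) ^ 2 ∂(μ.prod ν) = ∫ x, (∫ y, f (x, y) ∂ν) ^ 2 ∂μ := by
    simp [integral_fun_fst (f := fun x => (∫ y, f (x, y) ∂ν) ^ 2)]
  have hexpand : ∀ z : α × β, (f z - ∫ y, f (z.1, y) ∂ν) ^ 2 =
      f z ^ 2 - 2 * (f z * ∫ y, f (z.1, y) ∂ν) + (∫ y, f (z.1, y) ∂ν) ^ 2 := fun z => by ring
  have hsub : Integrable (fun z => f z ^ 2 - 2 * (f z * ∫ y, f (z.1, y) ∂ν)) (μ.prod ν) :=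
    hf.integrable_sq.sub (hmul.const_mul 2)
  simp_rw [hexpand]
  rw [integral_add hsub hf₁.integrable_sq,
    integral_sub hf.integrable_sq (hmul.const_mul 2), integral_const_mul, hcross, hsq]
  ring

theorem integral_sq_integral_prod_add_le (hf : MemLp f 2 (μ.prod ν)) :
    (∫ x, (∫ y, f (x, y) ∂ν) ^ 2 ∂μ) + ∫ y, (∫ x, f (x, y) ∂μ) ^ 2 ∂ν ≤
      ∫ z, f z ^ 2 ∂(μ.prod ν) + (∫ z, f z ∂(μ.prod ν)) ^ 2 := by
  set c := ∫ z, f z ∂(μ.prod ν)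
  have hf₁ := hf.integral_prod_left
  have hf₂ := hf.integral_prod_right
  have hg : MemLp (fun z => f z - ∫ y, f (z.1, y) ∂ν) 2 (μ.prod ν) := hf.sub (hf₁.comp_fst ν)
  have hf_int := hf.integrable one_le_two
  have hmean : ∫ y, (∫ x, f (x, y) ∂μ) ∂ν = c := (integral_prod_symm f hf_int).symm
  have hmarg : ∫ y, (∫ x, (f (x, y) - ∫ y', f (x, y') ∂ν) ∂μ) ^ 2 ∂ν =
      ∫ y, ((∫ x, f (x, y) ∂μ) - c) ^ 2 ∂ν := by
    refine integral_congr_ae ?_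
    filter_upwards [hf_int.prod_left_ae] with y hy
    rw [integral_sub hy (hf₁.integrable one_le_two), ← integral_prod _ hf_int]
  have hvar : ∫ y, ((∫ x, f (x, y) ∂μ) - c) ^ 2 ∂ν = ∫ y, (∫ x, f (x, y) ∂μ) ^ 2 ∂ν - c ^ 2 := by
    rw [← hmean, ← variance_eq_integral hf₂.aemeasurable, variance_eq_sub hf₂]
    rfl
  calc (∫ x, (∫ y, f (x, y) ∂ν) ^ 2 ∂μ) + ∫ y, (∫ x, f (x, y) ∂μ) ^ 2 ∂ν
      = (∫ x, (∫ y, f (x, y) ∂ν) ^ 2 ∂μ) + ∫ y, ((∫ x, f (x, y) ∂μ) - c) ^ 2 ∂ν + c ^ 2 := by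
        rw [hvar]; ring
    _ = (∫ x, (∫ y, f (x, y) ∂ν) ^ 2 ∂μ) +
          ∫ y, (∫ x, (f (x, y) - ∫ y', f (x, y') ∂ν) ∂μ) ^ 2 ∂ν + c ^ 2 := by
        rw [hmarg]
    _ ≤ (∫ x, (∫ y, f (x, y) ∂ν) ^ 2 ∂μ) +
          ∫ z, (f z - ∫ y, f (z.1, y) ∂ν) ^ 2 ∂(μ.prod ν) + c ^ 2 := by
        gcongr
        exact integral_sq_integral_prod_symm_le hg
    _ = ∫ z, f z ^ 2 ∂(μ.prod ν) + c ^ 2 := by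
        rw [integral_sq_eq_integral_sq_integral_prod_add hf]

end ProbabilityProduct

end MeasureTheory

theorem stdNormalPDF_eq_gaussianPDFReal : stdNormalPDF = gaussianPDFReal 0 1 := by
  ext x
  simp [stdNormalPDF, gaussianPDFReal]

theorem stdNormalPDF_pos (x : ℝ) : 0 < stdNormalPDF x := by
  unfold stdNormalPDF
  positivity

@[fun_prop]
theorem measurable_stdNormalPDF : Measurable stdNormalPDF := by
  unfold stdNormalPDF
  fun_prop

theorem inv_stdNormalPDF_mul_stdNormalPDF (x y : ℝ) :
    (stdNormalPDF x * stdNormalPDF y)⁻¹ = 2 * Real.pi * Real.exp ((x ^ 2 + y ^ 2) / 2) := by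
  have hπ : Real.sqrt (2 * Real.pi) * Real.sqrt (2 * Real.pi) = 2 * Real.pi :=
    Real.mul_self_sqrt (by positivity)
  unfold stdNormalPDF
  rw [mul_mul_mul_comm, ← Real.exp_add, ← mul_inv, hπ, mul_inv, inv_inv, ← Real.exp_neg]
  ring_nf

theorem integral_gaussianReal_div (g : ℝ → ℝ) :
    ∫ x, g x / stdNormalPDF x ∂(gaussianReal 0 1) = ∫ x, g x := by
  rw [integral_gaussianReal_eq_integral_smul one_ne_zero, ← stdNormalPDF_eq_gaussianPDFReal]
  exact integral_congr_ae (ae_of_all _ fun x => mul_div_cancel₀ _ (stdNormalPDF_pos x).ne')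

theorem gaussianReal_prod_eq_withDensity :
    (gaussianReal 0 1).prod (gaussianReal 0 1) = volume.withDensity
      (fun z : ℝ × ℝ => ENNReal.ofReal (stdNormalPDF z.1 * stdNormalPDF z.2)) := by
  rw [gaussianReal_of_var_ne_zero 0 one_ne_zero,
    prod_withDensity (measurable_gaussianPDF 0 1) (measurable_gaussianPDF 0 1),
    ← Measure.volume_eq_prod, stdNormalPDF_eq_gaussianPDFReal]
  congr with z
  rw [ENNReal.ofReal_mul (gaussianPDFReal_nonneg _ _ _)]
  rfl

theorem integrable_gaussianReal_prod_iff {g : ℝ × ℝ → ℝ} :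
    Integrable g ((gaussianReal 0 1).prod (gaussianReal 0 1)) ↔
      Integrable (fun z => stdNormalPDF z.1 * stdNormalPDF z.2 * g z) := by
  rw [gaussianReal_prod_eq_withDensity,
    integrable_withDensity_iff_integrable_smul' (by fun_prop)
      (ae_of_all _ fun _ => ENNReal.ofReal_lt_top)]
  simp [ENNReal.toReal_ofReal (mul_pos (stdNormalPDF_pos _) (stdNormalPDF_pos _)).le]

theorem integral_gaussianReal_prod (g : ℝ × ℝ → ℝ) :
    ∫ z, g z ∂((gaussianReal 0 1).prod (gaussianReal 0 1)) =
      ∫ z, stdNormalPDF z.1 * stdNormalPDF z.2 * g z := by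
  rw [gaussianReal_prod_eq_withDensity,
    integral_withDensity_eq_integral_toReal_smul (by fun_prop)
      (ae_of_all _ fun _ => ENNReal.ofReal_lt_top)]
  simp [ENNReal.toReal_ofReal (mul_pos (stdNormalPDF_pos _) (stdNormalPDF_pos _)).le]

theorem integral_gaussianReal_prod_div (g : ℝ × ℝ → ℝ) :
    ∫ z, g z / (stdNormalPDF z.1 * stdNormalPDF z.2)
      ∂((gaussianReal 0 1).prod (gaussianReal 0 1)) = ∫ z, g z := by
  rw [integral_gaussianReal_prod]
  exact integral_congr_ae (ae_of_all _ fun z =>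
    mul_div_cancel₀ _ (mul_pos (stdNormalPDF_pos z.1) (stdNormalPDF_pos z.2)).ne')

theorem integral_sq_integral_gaussianReal_div (q : ℝ → ℝ → ℝ) :
    ∫ a, (∫ b, q a b / (stdNormalPDF a * stdNormalPDF b) ∂(gaussianReal 0 1)) ^ 2
      ∂(gaussianReal 0 1) = ∫ a, (∫ b, q a b) ^ 2 / stdNormalPDF a := by
  simp_rw [← div_div, integral_gaussianReal_div, integral_div, div_pow, sq (stdNormalPDF _),
    ← div_div, integral_gaussianReal_div]

theorem memLp_two_div_gaussianReal_prod {p : ℝ × ℝ → ℝ} (hp : Integrable p)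
    (hp2 : Integrable fun z => p z ^ 2 / (stdNormalPDF z.1 * stdNormalPDF z.2)) :
    MemLp (fun z => p z / (stdNormalPDF z.1 * stdNormalPDF z.2)) 2
      ((gaussianReal 0 1).prod (gaussianReal 0 1)) := by
  have hac : (gaussianReal 0 1).prod (gaussianReal 0 1) ≪ volume := by
    rw [gaussianReal_prod_eq_withDensity]
    exact withDensity_absolutelyContinuous _ _
  have hm : AEStronglyMeasurable (fun z => p z / (stdNormalPDF z.1 * stdNormalPDF z.2))
      ((gaussianReal 0 1).prod (gaussianReal 0 1)) :=
    (hp.aemeasurable.div (by fun_prop)).aestronglyMeasurable.mono_ac hac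
  refine (memLp_two_iff_integrable_sq hm).2 <|
    integrable_gaussianReal_prod_iff.2 (hp2.congr (ae_of_all _ fun z => ?_))
  have := mul_pos (stdNormalPDF_pos z.1) (stdNormalPDF_pos z.2)
  field_simp

theorem chiSq_superadditive_general (p : ℝ × ℝ → ℝ) (hdens : (∫ x : ℝ × ℝ, p x) = 1)
    (hfin : Integrable (fun x : ℝ × ℝ => p x ^ 2 * Real.exp ((x.1 ^ 2 + x.2 ^ 2) / 2))) :
    ((∫ x₁ : ℝ, (∫ x₂ : ℝ, p (x₁, x₂)) ^ 2 / stdNormalPDF x₁) - 1) +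
      ((∫ x₂ : ℝ, (∫ x₁ : ℝ, p (x₁, x₂)) ^ 2 / stdNormalPDF x₂) - 1)
      ≤ (∫ x : ℝ × ℝ, p x ^ 2 / (stdNormalPDF x.1 * stdNormalPDF x.2)) - 1 := by
  have hp : Integrable p := .of_integral_ne_zero (by simp [hdens])
  have hp2 : Integrable fun z : ℝ × ℝ => p z ^ 2 / (stdNormalPDF z.1 * stdNormalPDF z.2) := by
    simp_rw [div_eq_mul_inv, inv_stdNormalPDF_mul_stdNormalPDF]
    exact (hfin.const_mul (2 * Real.pi)).congr (ae_of_all _ fun z => by ring)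
  have key := integral_sq_integral_prod_add_le (memLp_two_div_gaussianReal_prod hp hp2)
  have hsq : ∀ z : ℝ × ℝ, (p z / (stdNormalPDF z.1 * stdNormalPDF z.2)) ^ 2 =
      p z ^ 2 / (stdNormalPDF z.1 * stdNormalPDF z.2) / (stdNormalPDF z.1 * stdNormalPDF z.2) :=
    fun z => by rw [div_pow, sq (_ * _), div_div]
  have hswap : ∀ x y : ℝ, p (x, y) / (stdNormalPDF x * stdNormalPDF y) =
      p (x, y) / (stdNormalPDF y * stdNormalPDF x) := fun x y => by rw [mul_comm]
  simp_rw [hsq, integral_gaussianReal_prod_div, hdens] at key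
  rw [integral_sq_integral_gaussianReal_div (fun x y => p (x, y))] at key
  simp_rw [hswap] at key
  rw [integral_sq_integral_gaussianReal_div (fun y x => p (x, y))] at key
  linarith

/-- Superadditivity of the χ²-divergence from the standard normal law with respect to the
two coordinate marginals: if `X = (ξ₁, ξ₂)` has density `p` on `ℝ²` with
`∫∫ p² e^{(x₁²+x₂²)/2} < ∞`, then `χ²(X, Z) ≥ χ²(ξ₁, ζ) + χ²(ξ₂, ζ)`. -/
theorem chiSq_superadditive (p : ℝ × ℝ → ℝ) (hpm : Measurable p)
    (hp : ∀ x, 0 ≤ p x) (hdens : (∫ x : ℝ × ℝ, p x) = 1)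
    (hfin : Integrable (fun x : ℝ × ℝ => p x ^ 2 * Real.exp ((x.1 ^ 2 + x.2 ^ 2) / 2))) :
    ((∫ x₁ : ℝ, (∫ x₂ : ℝ, p (x₁, x₂)) ^ 2 / stdNormalPDF x₁) - 1) +
      ((∫ x₂ : ℝ, (∫ x₁ : ℝ, p (x₁, x₂)) ^ 2 / stdNormalPDF x₂) - 1)
      ≤ (∫ x : ℝ × ℝ, p x ^ 2 / (stdNormalPDF x.1 * stdNormalPDF x.2)) - 1 :=
  chiSq_superadditive_general p hdens hfin
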